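/- The monoid M₃ = ⟨a,b | aba = b⟩ embeds into the monoid of 2×2 tropical integer matrices, via a ↦ A = [[1,-∞],[-∞,-1]] and b ↦ B = [[-∞,1],[0,-∞]]; in particular A⊗B⊗A = B. -/

import Mathlib

/-- The max-plus tropical semiring `ℤ ∪ {-∞}`: tropical addition is `max`,
tropical multiplication is `+`, and `(0 : T)` is the tropical zero `-∞`. -/
abbrev T : Type := Tropical (WithTop ℤᵒᵈ)

/-- The element of the tropical semiring corresponding to the integer `k`. -/
def t (k : ℤ) : T := Tropical.trop ((OrderDual.toDual k : ℤᵒᵈ) : WithTop ℤᵒᵈ)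

/-- The defining relation of `M₃ = ⟨a, b | aba = b⟩`, with `a` encoded as `true`
and `b` as `false`. -/
def rel3 : FreeMonoid Bool → FreeMonoid Bool → Prop :=
  fun u v => u = FreeMonoid.of true * FreeMonoid.of false * FreeMonoid.of true ∧
    v = FreeMonoid.of false

def A : Matrix (Fin 2) (Fin 2) T := !![t 1, 0; 0, t (-1)]

def B : Matrix (Fin 2) (Fin 2) T := !![0, t 1; t 0, 0]

/-!
Since `b² a = (a b a) b a = a b (a b a) = a b²`, the square `b²` commutes with `a`, and every
element of `M₃` is `a ^ m * b ^ n` (`m ≥ 0`) or `b * a ^ (-m) * b ^ (n - 1)` (`m < 0`, `n ≥ 1`):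
left multiplication by `a` and `b` acts on the pair `(m, n)` as `(m + 1, n)` and `(-m, n + 1)`.
The matrices `A` and `B` are monomial, and the image of the element with coordinates `(m, n)` is
`diag(n/2 + m, n/2 - m)` for even `n` and `antidiag(n/2 + m + 1, n/2 - m)` for odd `n`, from which
`(m, n)` can be read off. Hence distinct normal forms have distinct images.
-/

namespace TropicalM3

lemma t_mul_t (x y : ℤ) : t x * t y = t (x + y) := rfl

lemma t_zero : t 0 = 1 := rfl

lemma t_injective : Function.Injective t := fun _ _ h =>
  by exact_mod_cast WithTop.coe_injective (Tropical.trop_injective h)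

lemma t_ne_zero (x : ℤ) : t x ≠ 0 := fun h =>
  WithTop.coe_ne_top (Tropical.trop_injective h)

def diagMat (x y : ℤ) : Matrix (Fin 2) (Fin 2) T := !![t x, 0; 0, t y]

def antidiagMat (x y : ℤ) : Matrix (Fin 2) (Fin 2) T := !![0, t x; t y, 0]

lemma A_eq_diagMat : A = diagMat 1 (-1) := rfl

lemma B_eq_antidiagMat : B = antidiagMat 1 0 := rfl

lemma diagMat_zero_zero : diagMat 0 0 = 1 := by
  rw [diagMat, t_zero, Matrix.one_fin_two]

lemma diagMat_mul_diagMat (x y x' y' : ℤ) :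
    diagMat x y * diagMat x' y' = diagMat (x + x') (y + y') := by
  simp [diagMat, t_mul_t]

lemma diagMat_mul_antidiagMat (x y x' y' : ℤ) :
    diagMat x y * antidiagMat x' y' = antidiagMat (x + x') (y + y') := by
  simp [diagMat, antidiagMat, t_mul_t]

lemma antidiagMat_mul_diagMat (x y x' y' : ℤ) :
    antidiagMat x y * diagMat x' y' = antidiagMat (x + y') (y + x') := by
  simp [diagMat, antidiagMat, t_mul_t]

lemma antidiagMat_mul_antidiagMat (x y x' y' : ℤ) :
    antidiagMat x y * antidiagMat x' y' = diagMat (x + y') (y + x') := by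
  simp [diagMat, antidiagMat, t_mul_t]

lemma diagMat_inj {x y x' y' : ℤ} : diagMat x y = diagMat x' y' ↔ x = x' ∧ y = y' := by
  simp [diagMat, t_injective.eq_iff]

lemma antidiagMat_inj {x y x' y' : ℤ} :
    antidiagMat x y = antidiagMat x' y' ↔ x = x' ∧ y = y' := by
  simp [antidiagMat, t_injective.eq_iff]

lemma diagMat_ne_antidiagMat (x y x' y' : ℤ) : diagMat x y ≠ antidiagMat x' y' := fun h =>
  t_ne_zero x (by simpa [diagMat, antidiagMat] using congrFun (congrFun h 0) 0)

lemma A_mul_B_mul_A : A * B * A = B := by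
  rw [A_eq_diagMat, B_eq_antidiagMat, diagMat_mul_antidiagMat, antidiagMat_mul_diagMat]
  norm_num

def repMat (m : ℤ) (n : ℕ) : Matrix (Fin 2) (Fin 2) T :=
  if Even n then diagMat (n / 2 + m) (n / 2 - m) else antidiagMat (n / 2 + m + 1) (n / 2 - m)

lemma repMat_zero_zero : repMat 0 0 = 1 := by
  simp [repMat, diagMat_zero_zero]

lemma A_mul_repMat (m : ℤ) (n : ℕ) : A * repMat m n = repMat (m + 1) n := by
  unfold repMat
  split_ifs
  · rw [A_eq_diagMat, diagMat_mul_diagMat]; congr 1 <;> ring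
  · rw [A_eq_diagMat, diagMat_mul_antidiagMat]; congr 1 <;> ring

lemma B_mul_repMat (m : ℤ) (n : ℕ) : B * repMat m n = repMat (-m) (n + 1) := by
  unfold repMat
  rcases Nat.even_or_odd n with hn | hn
  · rw [if_pos hn, if_neg (by simpa [Nat.even_add_one] using hn), B_eq_antidiagMat,
      antidiagMat_mul_diagMat]
    obtain ⟨k, rfl⟩ := hn
    congr 1 <;> omega
  · rw [if_neg (Nat.not_even_iff_odd.2 hn), if_pos hn.add_one, B_eq_antidiagMat,
      antidiagMat_mul_antidiagMat]
    obtain ⟨k, rfl⟩ := hn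
    congr 1 <;> omega

lemma repMat_injective {m m' : ℤ} {n n' : ℕ} (h : repMat m n = repMat m' n') :
    m = m' ∧ n = n' := by
  unfold repMat at h
  split_ifs at h with hn hn' hn'
  · rw [diagMat_inj] at h
    rw [Nat.even_iff] at hn hn'
    omega
  · exact absurd h (diagMat_ne_antidiagMat _ _ _ _)
  · exact absurd h.symm (diagMat_ne_antidiagMat _ _ _ _)
  · rw [antidiagMat_inj] at h
    rw [Nat.not_even_iff] at hn hn'
    omega

namespace M3

def a : PresentedMonoid rel3 := .of rel3 true

def b : PresentedMonoid rel3 := .of rel3 false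

lemma a_mul_b_mul_a : a * b * a = b :=
  PresentedMonoid.mk_eq_mk_of_rel (rels := rel3) ⟨rfl, rfl⟩

lemma commute_b_sq_a : Commute (b ^ 2) a :=
  calc b ^ 2 * a = (a * b * a) * b * a := by rw [a_mul_b_mul_a, sq]
    _ = a * b * (a * b * a) := by simp only [mul_assoc]
    _ = a * b ^ 2 := by rw [a_mul_b_mul_a, sq, mul_assoc]

def nf (m : ℤ) (n : ℕ) : PresentedMonoid rel3 :=
  if 0 ≤ m then a ^ m.natAbs * b ^ n else b * a ^ m.natAbs * b ^ (n - 1)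

lemma a_mul_nf {m : ℤ} {n : ℕ} (h : 0 ≤ m ∨ 1 ≤ n) : a * nf m n = nf (m + 1) n := by
  rcases le_or_gt 0 m with hm | hm
  · rw [nf, if_pos hm, nf, if_pos (by omega), ← mul_assoc, ← pow_succ',
      show (m + 1).natAbs = m.natAbs + 1 by omega]
  obtain ⟨n, rfl⟩ := Nat.exists_eq_add_of_le' (h.resolve_left hm.not_ge)
  have hcancel : a * (b * a ^ m.natAbs * b ^ n) = b * a ^ (m + 1).natAbs * b ^ n :=
    calc a * (b * a ^ m.natAbs * b ^ n) = (a * b * a) * a ^ (m + 1).natAbs * b ^ n := by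
          rw [show m.natAbs = (m + 1).natAbs + 1 by omega, pow_succ']; simp only [mul_assoc]
      _ = b * a ^ (m + 1).natAbs * b ^ n := by rw [a_mul_b_mul_a]
  rw [nf, if_neg hm.not_ge, Nat.add_sub_cancel, hcancel, nf]
  split_ifs
  · rw [show (m + 1).natAbs = 0 by omega, pow_zero, mul_one, one_mul, ← pow_succ']
  · rfl

lemma b_mul_nf {m : ℤ} {n : ℕ} (h : 0 ≤ m ∨ 1 ≤ n) : b * nf m n = nf (-m) (n + 1) := by
  rcases lt_trichotomy m 0 with hm | rfl | hm
  · obtain ⟨n, rfl⟩ := Nat.exists_eq_add_of_le' (h.resolve_left hm.not_ge)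
    rw [nf, if_neg hm.not_ge, nf, if_pos (by omega), Int.natAbs_neg, Nat.add_sub_cancel]
    calc b * (b * a ^ m.natAbs * b ^ n) = b ^ 2 * a ^ m.natAbs * b ^ n := by
          simp only [sq, mul_assoc]
      _ = a ^ m.natAbs * b ^ (n + 1 + 1) := by
          rw [(commute_b_sq_a.pow_right _).eq, mul_assoc, ← pow_add, add_comm]
  · simp [nf, pow_succ']
  · rw [nf, if_pos hm.le, nf, if_neg (by omega), Int.natAbs_neg, Nat.add_sub_cancel, mul_assoc]

end M3

def tropRep : PresentedMonoid rel3 →* Matrix (Fin 2) (Fin 2) T :=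
  PresentedMonoid.lift (fun c => cond c A B) (by rintro _ _ ⟨rfl, rfl⟩; simp [A_mul_B_mul_A])

lemma exists_nf_and_tropRep_eq (x : PresentedMonoid rel3) :
    ∃ m n, (0 ≤ m ∨ 1 ≤ n) ∧ x = M3.nf m n ∧ tropRep x = repMat m n := by
  induction x using Submonoid.induction_of_closure_eq_top_left
    (PresentedMonoid.closure_range_of rel3) with
  | one => exact ⟨0, 0, Or.inl le_rfl, by simp [M3.nf], by rw [map_one, repMat_zero_zero]⟩
  | mul_left _ hg x ih =>
    obtain ⟨c, rfl⟩ := hg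
    obtain ⟨m, n, hmn, rfl, hx⟩ := ih
    rw [map_mul, hx]
    cases c
    · exact ⟨-m, n + 1, Or.inr n.succ_pos, M3.b_mul_nf hmn, B_mul_repMat m n⟩
    · exact ⟨m + 1, n, by omega, M3.a_mul_nf hmn, A_mul_repMat m n⟩

lemma tropRep_injective : Function.Injective tropRep := by
  intro x y hxy
  obtain ⟨m, n, -, rfl, hx⟩ := exists_nf_and_tropRep_eq x
  obtain ⟨m', n', -, rfl, hy⟩ := exists_nf_and_tropRep_eq y
  obtain ⟨rfl, rfl⟩ := repMat_injective (hx ▸ hy ▸ hxy)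
  rfl

end TropicalM3

/-- The monoid `M₃ = ⟨a, b | aba = b⟩` embeds into the monoid of `2 × 2` tropical
matrices via `a ↦ A = [[1,-∞],[-∞,-1]]` and `b ↦ B = [[-∞,1],[0,-∞]]`;
in particular `ABA = B`. -/
theorem M3_embeds_in_M2_tropical :
    A * B * A = B ∧
      ∃ f : PresentedMonoid rel3 →* Matrix (Fin 2) (Fin 2) T,
        Function.Injective f ∧
          f (PresentedMonoid.of rel3 true) = A ∧
          f (PresentedMonoid.of rel3 false) = B :=
  ⟨TropicalM3.A_mul_B_mul_A, TropicalM3.tropRep, TropicalM3.tropRep_injective, rfl, rfl⟩
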